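/- (Corollary, forward direction) Suppose sup_N ‖Σ_{n=1}^N Π_{i=1}^H f_i ∘ T_i^n‖_{L^∞(ν)} < ∞, where the n-th summand is F ∘ Φⁿ with F = f₁ ⊗ ⋯ ⊗ f_H. Then there exists V ∈ L^∞(X^H, ν) such that F = V − V ∘ Φ holds ν-a.e. -/

import Mathlib

/-! Along the orbit of `z`, put `V z = limsup_N ∑_{n<N} F (Φⁿ z)`. Splitting off the first term
shows that the partial sums at `z` are `F z` plus those at `Φ z`, so `V = F + V ∘ Φ` wherever the
partial sums at `Φ z` (the sums of the hypothesis) are bounded; there `|V ∘ Φ|` is bounded by their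
supremum. For `V` to be essentially bounded it remains that `F` is: each coordinate projection
pushes `ν` to a measure absolutely continuous with respect to `μ`, so every `f i ∘ Tᵢⁿ` is in
`L^∞(ν)`, and so is their product; this also gives the `ν`-measurability of `F ∘ Φⁿ`, hence of
`V`. -/

open MeasureTheory Filter
open scoped ENNReal

theorem Filter.abs_limsup_le_of_forall_abs_le {ι : Type*} {l : Filter ι} [l.NeBot] {u : ι → ℝ}
    {c : ℝ} (h : ∀ n, |u n| ≤ c) : |limsup u l| ≤ c := by
  have hbdd : l.IsBoundedUnder (· ≤ ·) u := isBoundedUnder_of ⟨c, fun n => (abs_le.1 (h n)).2⟩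
  have hcobdd : l.IsCoboundedUnder (· ≤ ·) u :=
    (isBoundedUnder_of ⟨-c, fun n => (abs_le.1 (h n)).1⟩).isCoboundedUnder_le
  rw [abs_le]
  exact ⟨le_limsup_of_frequently_le (.of_forall fun n => (abs_le.1 (h n)).1) hbdd,
    limsup_le_of_le hcobdd (.of_forall fun n => (abs_le.1 (h n)).2)⟩

theorem limsup_birkhoffSum_eq_add {α : Type*} {f : α → α} {g : α → ℝ} {x : α} {c : ℝ}
    (h : ∀ N, |birkhoffSum f g N (f x)| ≤ c) :
    limsup (fun N => birkhoffSum f g N x) atTop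
      = g x + limsup (fun N => birkhoffSum f g N (f x)) atTop := by
  rw [← limsup_nat_add _ 1]
  simp_rw [birkhoffSum_succ']
  exact limsup_const_add _ _ _ (isBoundedUnder_of ⟨c, fun n => (abs_le.1 (h n)).2⟩)
    (isBoundedUnder_of ⟨-c, fun n => (abs_le.1 (h n)).1⟩).isCoboundedUnder_le

theorem sum_Icc_perm_pow_eq_birkhoffSum {α M : Type*} [AddCommMonoid M] (Φ : Equiv.Perm α)
    (g : α → M) (N : ℕ) (x : α) :
    ∑ n ∈ Finset.Icc 1 N, g ((Φ ^ n) x) = birkhoffSum Φ g N (Φ x) := by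
  rw [birkhoffSum, Finset.range_eq_Ico, ← Finset.Ico_add_one_right_eq_Icc,
    ← Finset.sum_Ico_add' (fun n => g ((Φ ^ n) x)) 0 N 1]
  refine Finset.sum_congr rfl fun n _ => ?_
  rw [Equiv.Perm.coe_pow, Function.iterate_succ_apply]

theorem AEMeasurable.limsup {α δ : Type*} [MeasurableSpace α]
    [MeasurableSpace δ] [ConditionallyCompleteLinearOrder α] [TopologicalSpace α]
    [OrderTopology α] [SecondCountableTopology α] [BorelSpace α] {μ : Measure δ}
    {f : ℕ → δ → α} (hf : ∀ n, AEMeasurable (f n) μ) :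
    AEMeasurable (fun x => limsup (fun n => f n x) atTop) μ :=
  ⟨fun x => Filter.limsup (fun n => (hf n).mk _ x) atTop,
    Measurable.limsup fun n => (hf n).measurable_mk, by
    filter_upwards [ae_all_iff.2 fun n => (hf n).ae_eq_mk] with x hx
    simp only [hx]⟩

theorem MeasureTheory.ae_norm_le_toReal_of_eLpNorm_top_le {α E : Type*} [MeasurableSpace α]
    [NormedAddCommGroup E] {μ : Measure α} {f : α → E} {C : ℝ≥0∞} (hC : C ≠ ⊤)
    (h : eLpNorm f ⊤ μ ≤ C) : ∀ᵐ x ∂μ, ‖f x‖ ≤ C.toReal := by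
  rw [eLpNorm_exponent_top] at h
  filter_upwards [enorm_ae_le_eLpNormEssSup f μ] with x hx
  rw [← toReal_enorm]
  exact ENNReal.toReal_mono hC (hx.trans h)

theorem MeasureTheory.ae_forall_norm_le_of_iSup_eLpNorm_top_lt_top {ι α E : Type*} [Countable ι]
    [MeasurableSpace α] [NormedAddCommGroup E] {μ : Measure α} {s : ι → α → E}
    (h : ⨆ N, eLpNorm (s N) ⊤ μ < ⊤) :
    ∀ᵐ x ∂μ, ∀ N, ‖s N x‖ ≤ (⨆ N, eLpNorm (s N) ⊤ μ).toReal :=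
  ae_all_iff.2 fun N =>
    ae_norm_le_toReal_of_eLpNorm_top_le h.ne (le_iSup (fun N => eLpNorm (s N) ⊤ μ) N)

theorem MeasureTheory.MemLp.comp_quasiMeasurePreserving_top {α β E : Type*} [MeasurableSpace α]
    [MeasurableSpace β] [NormedAddCommGroup E] {μ : Measure α} {ν : Measure β} {g : β → E}
    {f : α → β} (hg : MemLp g ⊤ ν) (hf : Measure.QuasiMeasurePreserving f μ ν) :
    MemLp (g ∘ f) ⊤ μ :=
  memLp_top_of_bound (hg.1.comp_quasiMeasurePreserving hf) _
    (hf.ae (ae_norm_le_toReal_of_eLpNorm_top_le hg.2.ne le_rfl))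

theorem MeasureTheory.MeasurePreserving.perm_zpow {X : Type*} [MeasurableSpace X]
    {μ : Measure X} {e : Equiv.Perm X} (hμ : MeasurePreserving e μ μ) (he : Measurable e)
    (he' : Measurable e.symm) (k : ℤ) : MeasurePreserving ⇑(e ^ k) μ μ := by
  obtain ⟨n, rfl | rfl⟩ := Int.eq_nat_or_neg k
  · simpa [Equiv.Perm.coe_pow] using hμ.iterate n
  · have hinv : MeasurePreserving ⇑e⁻¹ μ μ := hμ.symm (⟨e, he, he'⟩ : X ≃ᵐ X)
    rw [zpow_neg, zpow_natCast, ← inv_pow, Equiv.Perm.coe_pow]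
    exact hinv.iterate n

theorem Equiv.Perm.semiconj_eval_zpow {ι X : Type*} {T : ι → Equiv.Perm X}
    {Φ : Equiv.Perm (ι → X)} (hΦ : ∀ y i, Φ y i = T i (y i)) (i : ι) (k : ℤ) :
    Function.Semiconj (fun y => y i) ⇑(Φ ^ k) ⇑(T i ^ k) := by
  have h : Function.Semiconj (fun y => y i) Φ (T i) := fun y => hΦ y i
  obtain ⟨n, rfl | rfl⟩ := Int.eq_nat_or_neg k
  · simpa [Equiv.Perm.coe_pow] using h.iterate_right n
  · have hinv : Function.Semiconj (fun y => y i) ⇑Φ⁻¹ ⇑(T i)⁻¹ :=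
      h.inverses_right Φ.apply_symm_apply (T i).symm_apply_apply
    rw [zpow_neg, zpow_natCast, zpow_neg, zpow_natCast, ← inv_pow, ← inv_pow,
      Equiv.Perm.coe_pow, Equiv.Perm.coe_pow]
    exact hinv.iterate_right n

theorem quasiMeasurePreserving_eval_orbitMeasure {ι X : Type*} [MeasurableSpace X]
    {μ : Measure X} {T : ι → Equiv.Perm X} {Φ : Equiv.Perm (ι → X)}
    (hΦ : ∀ y i, Φ y i = T i (y i)) (hΦmeas : ∀ n : ℤ, Measurable ⇑(Φ ^ n))
    (hT : ∀ i (n : ℤ), MeasurePreserving ⇑(T i ^ n) μ μ) (c : ℝ≥0∞) (w : ℤ → ℝ≥0∞) (i : ι) :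
    Measure.QuasiMeasurePreserving (fun z => z i)
      (c • Measure.sum fun n => w n • Measure.map ⇑(Φ ^ n) (Measure.map (fun x _ => x) μ)) μ := by
  have heval : Measurable fun z : ι → X => z i := measurable_pi_apply i
  have horbit (n : ℤ) :
      Measure.map (fun z => z i) (Measure.map ⇑(Φ ^ n) (Measure.map (fun x _ => x) μ)) = μ := by
    have hdiag : Measurable fun (x : X) (_ : ι) => x :=
      measurable_pi_lambda _ fun _ => measurable_id
    rw [Measure.map_map heval (hΦmeas n), Measure.map_map (heval.comp (hΦmeas n)) hdiag]
    convert (hT i n).map_eq using 2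
    ext x
    exact (Equiv.Perm.semiconj_eval_zpow hΦ i n).eq fun _ => x
  refine ⟨heval, ?_⟩
  rw [Measure.map_smul, Measure.map_sum heval.aemeasurable]
  refine Measure.smul_absolutelyContinuous.trans (Measure.absolutelyContinuous_sum_left fun n => ?_)
  rw [Measure.map_smul, horbit]
  exact Measure.smul_absolutelyContinuous

theorem memLp_top_prod_comp_zpow_orbitMeasure {ι X 𝕜 : Type*} [Fintype ι] [MeasurableSpace X]
    [NormedCommRing 𝕜] {μ : Measure X} {T : ι → Equiv.Perm X} {Φ : Equiv.Perm (ι → X)}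
    (hΦ : ∀ y i, Φ y i = T i (y i)) (hΦmeas : ∀ n : ℤ, Measurable ⇑(Φ ^ n))
    (hT : ∀ i (n : ℤ), MeasurePreserving ⇑(T i ^ n) μ μ) {f : ι → X → 𝕜}
    (hf : ∀ i, MemLp (f i) ⊤ μ) (c : ℝ≥0∞) (w : ℤ → ℝ≥0∞) (n : ℤ) :
    MemLp (fun z => ∏ i, f i ((Φ ^ n) z i)) ⊤
      (c • Measure.sum fun n => w n • Measure.map ⇑(Φ ^ n) (Measure.map (fun x _ => x) μ)) := by
  have hcoord (i : ι) : (fun z => f i ((Φ ^ n) z i)) = f i ∘ ⇑(T i ^ n) ∘ fun z => z i :=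
    funext fun z => congrArg (f i) ((Equiv.Perm.semiconj_eval_zpow hΦ i n).eq z)
  convert MemLp.prod' (s := Finset.univ) (p := fun _ => ⊤)
    (f := fun i z => f i ((Φ ^ n) z i)) fun i _ => ?_
  · simp
  rw [hcoord]
  exact (hf i).comp_quasiMeasurePreserving_top
    ((hT i n).quasiMeasurePreserving.comp
      (quasiMeasurePreserving_eval_orbitMeasure hΦ hΦmeas hT c w i))

theorem stmt_9_general
    {X : Type*} [MeasurableSpace X] (μ : Measure X)
    (H : ℕ) (T : Fin H → Equiv.Perm X)
    (hTm : ∀ i : Fin H, Measurable ⇑(T i))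
    (hTm' : ∀ i : Fin H, Measurable ⇑(T i).symm)
    (hTpres : ∀ i : Fin H, MeasurePreserving (T i) μ μ)
    (μΔ : Measure (Fin H → X))
    (hμΔ : μΔ = Measure.map (fun x => fun _ : Fin H => x) μ)
    (Φ : Equiv.Perm (Fin H → X))
    (hΦ : ∀ (y : Fin H → X) (i : Fin H), Φ y i = T i (y i))
    (hΦmeas : ∀ n : ℤ, Measurable ⇑(Φ ^ n))
    (ν : Measure (Fin H → X))
    (hν : ν = (3 : ℝ≥0∞)⁻¹ •
      Measure.sum (fun n : ℤ => ((2 : ℝ≥0∞) ^ n.natAbs)⁻¹ • Measure.map ⇑(Φ ^ n) μΔ))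
    (f : Fin H → X → ℝ) (hf : ∀ i : Fin H, MemLp (f i) ⊤ μ)
    (F : (Fin H → X) → ℝ) (hF : ∀ y : Fin H → X, F y = ∏ i : Fin H, f i (y i))
    (hsup : (⨆ N : ℕ, eLpNorm (fun z => ∑ n ∈ Finset.Icc 1 N, F ((Φ ^ n) z)) ⊤ ν) < ⊤) :
    ∃ V : (Fin H → X) → ℝ, MemLp V ⊤ ν ∧ ∀ᵐ z ∂ν, F z = V z - V (Φ z) := by
  have hT (i : Fin H) (n : ℤ) : MeasurePreserving ⇑(T i ^ n) μ μ :=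
    (hTpres i).perm_zpow (hTm i) (hTm' i) n
  have hF_orbit (n : ℕ) : MemLp (F ∘ ⇑(Φ ^ n)) ⊤ ν := by
    rw [hν, hμΔ]
    simpa [Function.comp_def, hF] using
      memLp_top_prod_comp_zpow_orbitMeasure hΦ hΦmeas hT hf _ _ n
  obtain ⟨K, hK⟩ : ∃ K : ℝ, ∀ᵐ z ∂ν, |F z| ≤ K :=
    ⟨_, ae_norm_le_toReal_of_eLpNorm_top_le (hF_orbit 0).2.ne le_rfl⟩
  obtain ⟨c, hS⟩ : ∃ c : ℝ, ∀ᵐ z ∂ν, ∀ N, |∑ n ∈ Finset.Icc 1 N, F ((Φ ^ n) z)| ≤ c :=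
    ⟨_, ae_forall_norm_le_of_iSup_eLpNorm_top_lt_top hsup⟩
  simp only [sum_Icc_perm_pow_eq_birkhoffSum] at hS
  set V := fun z => limsup (fun N => birkhoffSum Φ F N z) atTop
  have hV : ∀ᵐ z ∂ν, V z = F z + V (Φ z) ∧ |V (Φ z)| ≤ c := by
    filter_upwards [hS] with z hz
    exact ⟨limsup_birkhoffSum_eq_add hz, abs_limsup_le_of_forall_abs_le hz⟩
  have hVmeas : AEStronglyMeasurable V ν := by
    refine (AEMeasurable.limsup fun N => ?_).aestronglyMeasurable
    unfold birkhoffSum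
    simp only [← Equiv.Perm.coe_pow]
    exact Finset.aemeasurable_fun_sum _ fun n _ => (hF_orbit n).1.aemeasurable
  refine ⟨V, memLp_top_of_bound hVmeas (K + c) ?_, ?_⟩
  · filter_upwards [hV, hK] with z ⟨hVz, hVΦz⟩ hKz
    rw [Real.norm_eq_abs, hVz]
    exact (abs_add_le _ _).trans (add_le_add hKz hVΦz)
  · filter_upwards [hV] with z ⟨hVz, _⟩
    linarith

theorem stmt_9
    {X : Type*} [MeasurableSpace X] (μ : Measure X) [IsProbabilityMeasure μ]
    (H : ℕ) (T : Fin H → Equiv.Perm X)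
    (hTm : ∀ i : Fin H, Measurable ⇑(T i))
    (hTm' : ∀ i : Fin H, Measurable ⇑(T i).symm)
    (hTpres : ∀ i : Fin H, MeasurePreserving (T i) μ μ)
    (μΔ : Measure (Fin H → X))
    (hμΔ : μΔ = Measure.map (fun x => fun _ : Fin H => x) μ)
    (Φ : Equiv.Perm (Fin H → X))
    (hΦ : ∀ (y : Fin H → X) (i : Fin H), Φ y i = T i (y i))
    (hΦmeas : ∀ n : ℤ, Measurable ⇑(Φ ^ n))
    (ν : Measure (Fin H → X))
    (hν : ν = (3 : ℝ≥0∞)⁻¹ •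
      Measure.sum (fun n : ℤ => ((2 : ℝ≥0∞) ^ n.natAbs)⁻¹ • Measure.map ⇑(Φ ^ n) μΔ))
    (f : Fin H → X → ℝ) (hf : ∀ i : Fin H, MemLp (f i) ⊤ μ)
    (F : (Fin H → X) → ℝ) (hF : ∀ y : Fin H → X, F y = ∏ i : Fin H, f i (y i))
    (hsup : (⨆ N : ℕ, eLpNorm (fun z => ∑ n ∈ Finset.Icc 1 N, F ((Φ ^ n) z)) ⊤ ν) < ⊤) :
    ∃ V : (Fin H → X) → ℝ, MemLp V ⊤ ν ∧ ∀ᵐ z ∂ν, F z = V z - V (Φ z) :=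
  stmt_9_general μ H T hTm hTm' hTpres μΔ hμΔ Φ hΦ hΦmeas ν hν f hf F hF hsup
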